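/- Let R := max_{i∈[n]} ‖a_i‖, let μ > 0, and let θ̂* ∈ ℝ^d be a unit vector with y_i a_iᵀθ̂* ≥ μ for all i ∈ [n]. Set α := R²/μ. If θ̂ ∈ ℝ^d and the set S := {i ∈ [n] : y_i a_iᵀθ̂ ≤ 0} is nonempty, then the Batch Perceptron update θ̂⁺ := θ̂ + (1/n) Σ_{i∈S} y_i a_i satisfies ‖θ̂⁺ − α θ̂*‖² ≤ ‖θ̂ − α θ̂*‖² − R²/n. -/

import Mathlib

open scoped RealInnerProductSpace BigOperators

/-!
Write `v = θ̂ - α θ̂*` and `G = ∑_{i ∈ S} y_i a_i`, with `c = |S|`. Expanding the square,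
`‖θ̂⁺ - α θ̂*‖² = ‖v‖² + (2/n)⟪θ̂, G⟫ - (2α/n)⟪θ̂*, G⟫ + ‖G‖²/n²`. Every term of `G` is misclassified,
so `⟪θ̂, G⟫ ≤ 0`; the margin gives `⟪θ̂*, G⟫ ≥ c μ`, and `‖G‖ ≤ c R`. Since `α μ = R²`, the
distance drops by at least `(2c/n - c²/n²) R²`, which is `≥ R²/n` because `1 ≤ c ≤ n`.
-/

open Finset

section InnerProductSpace

variable {ι E : Type*} [NormedAddCommGroup E] [InnerProductSpace ℝ E]

theorem inner_sum_smul_nonpos_of_mul_inner_nonpos (s : Finset ι) (a : ι → E) (y : ι → ℝ)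
    {θ : E} (hs : ∀ i ∈ s, y i * ⟪a i, θ⟫ ≤ 0) : ⟪θ, ∑ i ∈ s, y i • a i⟫ ≤ 0 := by
  rw [inner_sum]
  refine sum_nonpos fun i hi => ?_
  rw [real_inner_smul_right, real_inner_comm]
  exact hs i hi

theorem card_mul_le_inner_sum_smul_of_margin (s : Finset ι) (a : ι → E) (y : ι → ℝ)
    {θ : E} {μ : ℝ} (hs : ∀ i ∈ s, μ ≤ y i * ⟪a i, θ⟫) :
    #s * μ ≤ ⟪θ, ∑ i ∈ s, y i • a i⟫ := by
  rw [inner_sum, ← nsmul_eq_mul]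
  refine card_nsmul_le_sum s _ μ fun i hi => ?_
  rw [real_inner_smul_right, real_inner_comm]
  exact hs i hi

theorem norm_add_smul_sub_sq_le {θ θstar G : E} {η μ R c : ℝ} (hη : 0 ≤ η) (hμ : 0 < μ)
    (hθ : ⟪θ, G⟫ ≤ 0) (hmargin : c * μ ≤ ⟪θstar, G⟫) (hG : ‖G‖ ≤ c * R) :
    ‖θ + η • G - (R ^ 2 / μ) • θstar‖ ^ 2
      ≤ ‖θ - (R ^ 2 / μ) • θstar‖ ^ 2 - (2 * η * c - η ^ 2 * c ^ 2) * R ^ 2 := by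
  set α := R ^ 2 / μ
  have hαμ : α * μ = R ^ 2 := div_mul_cancel₀ _ hμ.ne'
  have hαθstar : c * R ^ 2 ≤ α * ⟪θstar, G⟫ := by
    rw [← hαμ, mul_left_comm]
    exact mul_le_mul_of_nonneg_left hmargin (by positivity)
  have hGsq : ‖G‖ ^ 2 ≤ (c * R) ^ 2 := pow_le_pow_left₀ (norm_nonneg G) hG 2
  have hsplit : θ + η • G - α • θstar = (θ - α • θstar) + η • G := by abel
  rw [hsplit, norm_add_sq_real, inner_sub_left, real_inner_smul_right, real_inner_smul_right,
    real_inner_smul_left, norm_smul, Real.norm_of_nonneg hη, mul_pow]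
  nlinarith [mul_nonpos_of_nonneg_of_nonpos hη hθ, mul_le_mul_of_nonneg_left hαθstar hη,
    mul_le_mul_of_nonneg_left hGsq (sq_nonneg η)]

end InnerProductSpace

theorem norm_sum_smul_le_card_mul {ι F : Type*} [SeminormedAddCommGroup F] [NormedSpace ℝ F]
    (s : Finset ι) (a : ι → F) (y : ι → ℝ) {R : ℝ} (hy : ∀ i ∈ s, |y i| ≤ 1)
    (ha : ∀ i ∈ s, ‖a i‖ ≤ R) : ‖∑ i ∈ s, y i • a i‖ ≤ #s * R := by
  rw [← nsmul_eq_mul, ← sum_const]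
  refine norm_sum_le_of_le s fun i hi => ?_
  rw [norm_smul, Real.norm_eq_abs]
  calc |y i| * ‖a i‖ ≤ 1 * R :=
        mul_le_mul (hy i hi) (ha i hi) (norm_nonneg _) zero_le_one
    _ = R := one_mul R

theorem inv_le_two_mul_div_sub_sq_div_sq {c n : ℝ} (hc : 1 ≤ c) (hcn : c ≤ n) :
    1 / n ≤ 2 * (1 / n) * c - (1 / n) ^ 2 * c ^ 2 := by
  have hn : 0 < n := by linarith
  rw [show 2 * (1 / n) * c - (1 / n) ^ 2 * c ^ 2 = (2 * c * n - c ^ 2) / n ^ 2 by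
    field_simp, div_le_div_iff₀ hn (by positivity)]
  nlinarith [mul_nonneg (sub_nonneg.2 hc) (sub_nonneg.2 hcn)]

theorem batch_perceptron_step_decrease {d n : ℕ}
    (a : Fin n → EuclideanSpace ℝ (Fin d)) (y : Fin n → ℝ)
    (hy : ∀ i, y i = 1 ∨ y i = -1)
    (μ R : ℝ) (hμ : 0 < μ)
    (hR : IsGreatest (Set.range fun i => ‖a i‖) R)
    (θstar : EuclideanSpace ℝ (Fin d))
    (hmargin : ∀ i, μ ≤ y i * ⟪a i, θstar⟫)
    (θhat : EuclideanSpace ℝ (Fin d))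
    (hS : (Finset.univ.filter (fun i => y i * ⟪a i, θhat⟫ ≤ 0)).Nonempty) :
    ‖θhat + ((1 : ℝ) / n) •
        (∑ i ∈ Finset.univ.filter (fun i => y i * ⟪a i, θhat⟫ ≤ 0), y i • a i)
      - (R ^ 2 / μ) • θstar‖ ^ 2
      ≤ ‖θhat - (R ^ 2 / μ) • θstar‖ ^ 2 - R ^ 2 / n := by
  set S := univ.filter fun i => y i * ⟪a i, θhat⟫ ≤ 0
  have hc : (1 : ℝ) ≤ #S := Nat.one_le_cast.2 hS.card_pos
  have hcn : (#S : ℝ) ≤ n := by exact_mod_cast (card_le_univ S).trans (Fintype.card_fin n).le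
  have hyS : ∀ i ∈ S, |y i| ≤ 1 := fun i _ => by rcases hy i with h | h <;> simp [h]
  have hstep := norm_add_smul_sub_sq_le (θstar := θstar) (η := 1 / n) (by positivity) hμ
    (inner_sum_smul_nonpos_of_mul_inner_nonpos S a y fun i hi => (mem_filter.1 hi).2)
    (card_mul_le_inner_sum_smul_of_margin S a y fun i _ => hmargin i)
    (norm_sum_smul_le_card_mul S a y hyS fun i _ => hR.2 ⟨i, rfl⟩)
  have hdecrease := mul_le_mul_of_nonneg_right (inv_le_two_mul_div_sub_sq_div_sq hc hcn)
    (sq_nonneg R)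
  rw [one_div_mul_eq_div] at hdecrease
  linarith
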